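/- arXiv:2103.06215 — 2 statements merged into one kernel-verified Lean document; each statement's English description precedes it below -/
import Mathlib

section
/- Let T be a torus with character lattice M, let N be a finite multiset of weights in M closed under negation (a symmetric representation), and let λ, μ be cocharacters. In the fraction field of the group algebra ℚ(q^M), the identity ∏_{β ∈ A_μ}(1−q^{−β}) / ∏_{β ∈ A_λ}(1−q^{−β}) = (−1)^{c} · q^{𝒩} holds, where A_λ = {β ∈ N : λ(β) > 0}, A_μ = {β ∈ N : μ(β) > 0}, provided λ and μ have the same zero set on N; here c = |{β ∈ A_λ : μ(β) < 0}| and 𝒩 = ∑_{β ∈ A_λ, μ(β)<0} β. -/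
instance (priority := low) {M : Type} [AddCommGroup M] [LinearOrder M] [IsOrderedAddMonoid M] :
    IsDomain (AddMonoidAlgebra ℚ M) :=
  NoZeroDivisors.to_isDomain _

/-! Since `λ` and `μ` vanish on the same weights, `A_λ` splits as `P + S` with `μ > 0` on `P`
and `μ < 0` on `S`, and the symmetry `N = -N` gives `A_μ = P + (-S)`. The factors over `P`
cancel, and `1 - q^β = -q^β (1 - q^{-β})` turns the product over `-S` into `(-1)^{|S|} q^{ΣS}`
times the product over `S`. -/

lemma Multiset.iff_of_filter_eq_filter {α : Type*} {p q : α → Prop} [DecidablePred p]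
    [DecidablePred q] {s : Multiset α} (h : s.filter p = s.filter q) {a : α} (ha : a ∈ s) :
    p a ↔ q a := by
  simpa [ha] using congrArg (a ∈ ·) h

lemma Multiset.filter_eq_map_neg_filter {α : Type*} [InvolutiveNeg α] {s : Multiset α}
    (hs : s.map Neg.neg = s) (p : α → Prop) [DecidablePred p] :
    s.filter p = (s.filter fun a => p (-a)).map Neg.neg := by
  conv_lhs => rw [← hs]
  rw [Multiset.filter_map]
  rfl

section SameZeroSet

variable {M Γ : Type*} [AddCommGroup M] [AddCommGroup Γ] [LinearOrder Γ]
  {N : Multiset M} {l μ : M →+ Γ}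

lemma filter_pos_eq_add_filter_neg
    (hzero : N.filter (fun β => l β = 0) = N.filter (fun β => μ β = 0)) :
    N.filter (fun β => 0 < l β) =
      (N.filter fun β => 0 < l β).filter (fun β => 0 < μ β) +
        (N.filter fun β => 0 < l β).filter (fun β => μ β < 0) := by
  conv_lhs => rw [← Multiset.filter_add_not (fun β => 0 < μ β) (N.filter fun β => 0 < l β)]
  congr 1
  refine Multiset.filter_congr fun β hβ => ?_
  obtain ⟨hβN, hlβ⟩ := Multiset.mem_filter.mp hβ
  have hμβ : μ β ≠ 0 := fun h => hlβ.ne' ((Multiset.iff_of_filter_eq_filter hzero hβN).mpr h)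
  rw [not_lt, le_iff_lt_or_eq, or_iff_left hμβ]

lemma filter_pos_eq_add_map_neg [IsOrderedAddMonoid Γ] (hsym : N.map Neg.neg = N)
    (hzero : N.filter (fun β => l β = 0) = N.filter (fun β => μ β = 0)) :
    N.filter (fun β => 0 < μ β) =
      (N.filter fun β => 0 < l β).filter (fun β => 0 < μ β) +
        ((N.filter fun β => 0 < l β).filter (fun β => μ β < 0)).map Neg.neg := by
  rw [← Multiset.filter_add_not (fun β => 0 < l β) (N.filter fun β => 0 < μ β),
    Multiset.filter_filter, Multiset.filter_filter, Multiset.filter_filter,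
    Multiset.filter_eq_map_neg_filter hsym (fun β => ¬0 < l β ∧ 0 < μ β)]
  congr 1
  · refine Multiset.filter_congr fun _ _ => and_comm
  · rw [Multiset.filter_filter]
    congr 1
    refine Multiset.filter_congr fun β hβ => ?_
    have hz := Multiset.iff_of_filter_eq_filter hzero hβ
    simp only [map_neg, neg_pos, not_lt]
    constructor
    · rintro ⟨hlβ, hμβ⟩
      exact ⟨hμβ, hlβ.lt_of_ne fun h => hμβ.ne (hz.mp h.symm)⟩
    · rintro ⟨hμβ, hlβ⟩
      exact ⟨hlβ.le, hμβ⟩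

end SameZeroSet

lemma AddChar.map_multiset_sum_eq_prod {A R : Type*} [AddCommMonoid A] [CommMonoid R]
    (ψ : AddChar A R) (s : Multiset A) : ψ s.sum = (s.map ψ).prod := by
  induction s using Multiset.induction with
  | empty => simp
  | cons a s ih => simp [AddChar.map_add_eq_mul, ih]

section OneSub

variable {A R : Type*} [AddCommGroup A] [CommRing R] (ψ : AddChar A R)

lemma AddChar.one_sub_eq_neg_mul_one_sub_neg (a : A) :
    1 - ψ a = -ψ a * (1 - ψ (-a)) := by
  rw [mul_sub, mul_one, neg_mul, ← AddChar.map_add_eq_mul, add_neg_cancel,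
    AddChar.map_zero_eq_one]
  ring

lemma AddChar.multiset_prod_map_one_sub (s : Multiset A) :
    (s.map fun a => 1 - ψ a).prod =
      (-1) ^ Multiset.card s * ψ s.sum * (s.map fun a => 1 - ψ (-a)).prod := by
  have hneg : (s.map fun a => -ψ a).prod = (-1) ^ Multiset.card s * ψ s.sum := by
    rw [ψ.map_multiset_sum_eq_prod, ← Multiset.card_map ψ, ← Multiset.prod_map_neg,
      Multiset.map_map]
    rfl
  rw [funext ψ.one_sub_eq_neg_mul_one_sub_neg, Multiset.prod_map_mul, hneg]

end OneSub

namespace AddMonoidAlgebra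

variable (k M A : Type*) [CommSemiring k] [AddCommMonoid M] [CommSemiring A] [Algebra k[M] A]

noncomputable def monomialChar : AddChar M A where
  toFun β := algebraMap k[M] A (single β 1)
  map_zero_eq_one' := by rw [← one_def, map_one]
  map_add_eq_mul' a b := by rw [← map_mul, single_mul_single, one_mul]

variable {k M A}

lemma monomialChar_ne_one [Nontrivial k] [FaithfulSMul k[M] A] {β : M} (hβ : β ≠ 0) :
    monomialChar k M A β ≠ 1 := by
  rw [monomialChar, AddChar.coe_mk, ← map_one (algebraMap k[M] A),
    (FaithfulSMul.algebraMap_injective k[M] A).ne_iff, one_def, Ne, single_inj]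
  simp [hβ]

end AddMonoidAlgebra

/-- Let `T` be a torus with character lattice `M`, `N` a finite multiset
of weights closed under negation, and `l, μ` cocharacters with the same zero set on `N`.
In the fraction field of the group algebra `ℚ[M]`, with `q^β` the class of `β`,
`∏_{β ∈ A_μ}(1−q^{−β}) / ∏_{β ∈ A_λ}(1−q^{−β}) = (−1)^c · q^{𝒩}`, where
`A_λ = {β ∈ N : l β > 0}`, `A_μ = {β ∈ N : μ β > 0}`, `c = #{β ∈ A_λ : μ β < 0}` and
`𝒩 = ∑_{β ∈ A_λ, μ β < 0} β`. -/
theorem symmetric_weights_product_ratio {M : Type} [AddCommGroup M] [LinearOrder M] [IsOrderedAddMonoid M]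
    (N : Multiset M) (hsym : N.map (fun β => -β) = N)
    (l μ : M →+ ℤ)
    (hzero : N.filter (fun β => l β = 0) = N.filter (fun β => μ β = 0)) :
    letI F := FractionRing (AddMonoidAlgebra ℚ M)
    letI q : M → F := fun β => algebraMap (AddMonoidAlgebra ℚ M) F (AddMonoidAlgebra.single β 1)
    (((N.filter fun β => 0 < μ β).map (fun β => 1 - q (-β))).prod) /
        (((N.filter fun β => 0 < l β).map (fun β => 1 - q (-β))).prod) =
      (-1 : F) ^ (((N.filter fun β => 0 < l β).filter fun β => μ β < 0).card) *
        q (((N.filter fun β => 0 < l β).filter fun β => μ β < 0).sum) := by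
  set q := AddMonoidAlgebra.monomialChar ℚ M (FractionRing (AddMonoidAlgebra ℚ M))
  set A := N.filter fun β => 0 < l β
  set P := A.filter fun β => 0 < μ β
  set S := A.filter fun β => μ β < 0
  change ((N.filter fun β => 0 < μ β).map fun β => 1 - q (-β)).prod /
      (A.map fun β => 1 - q (-β)).prod = (-1) ^ Multiset.card S * q S.sum
  have hA : A = P + S := filter_pos_eq_add_filter_neg hzero
  have hAμ : N.filter (fun β => 0 < μ β) = P + S.map Neg.neg :=
    filter_pos_eq_add_map_neg hsym hzero
  have hden : (A.map fun β => 1 - q (-β)).prod ≠ 0 := by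
    refine Multiset.prod_ne_zero fun h => ?_
    obtain ⟨β, hβ, hβ1⟩ := Multiset.mem_map.mp h
    have hlβ : 0 < l β := (Multiset.mem_filter.mp hβ).2
    have hβ0 : -β ≠ 0 := neg_ne_zero.mpr fun h0 => by simp [h0] at hlβ
    exact AddMonoidAlgebra.monomialChar_ne_one hβ0 (sub_eq_zero.mp hβ1).symm
  rw [div_eq_iff hden, hAμ, hA, Multiset.map_add, Multiset.prod_add, Multiset.map_add,
    Multiset.prod_add, Multiset.map_map]
  simp only [Function.comp_def, neg_neg]
  rw [q.multiset_prod_map_one_sub]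
  ring
end

section
/- Let Φ be a root system with Weyl group W, ρ half the sum of positive roots, and let N be a W-stable, negation-stable finite multiset of weights. Let λ be a dominant cocharacter and χ a dominant weight with ⟨λ, χ⟩ = (1/2)⟨λ, N^{λ>0}⟩ − (1/2)⟨λ, g^{λ>0}⟩ and χ + ρ ∈ (1/2)𝕎, where 𝕎 = ∑_{β∈N}[0,β]. Then χ = (1/2)N^{λ>0} − (1/2)g^{λ>0} + ψ, where ψ is a weight with ⟨λ,ψ⟩ = 0 and ψ + ρ_L ∈ (1/2)𝕎(N^λ), with ρ_L half the sum of positive roots of the Levi root subsystem Φ^λ = {α ∈ Φ : ⟨λ,α⟩ = 0} and 𝕎(N^λ) the Minkowski polytope of N^λ = {β ∈ N : ⟨λ,β⟩ = 0}. -/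
open Pointwise

lemma mink_mem_of {M : Type} [AddCommGroup M] [Module ℝ M]
    (c : Multiset (ℝ × M)) (h : ∀ p ∈ c, p.1 ∈ Set.Icc (0:ℝ) 1) :
    (c.map fun p => p.1 • p.2).sum ∈ ((c.map Prod.snd).map fun β => segment ℝ (0:M) β).sum := by
  induction c using Multiset.induction with
  | empty => simp
  | cons p c ih =>
    simp only [Multiset.map_cons, Multiset.sum_cons]
    refine Set.add_mem_add ?_ (ih fun q hq => h q (Multiset.mem_cons_of_mem hq))
    rw [segment_eq_image]
    exact ⟨p.1, h p (Multiset.mem_cons_self p c), by simp⟩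

lemma mink_exists {M : Type} [AddCommGroup M] [Module ℝ M]
    (N : Multiset M) (x : M) (hx : x ∈ (N.map fun β => segment ℝ (0:M) β).sum) :
    ∃ c : Multiset (ℝ × M), c.map Prod.snd = N ∧ (∀ p ∈ c, p.1 ∈ Set.Icc (0:ℝ) 1) ∧
      x = (c.map fun p => p.1 • p.2).sum := by
  induction N using Multiset.induction generalizing x with
  | empty => exact ⟨0, by simp, by simp, by simpa using hx⟩
  | cons β N ih =>
    simp only [Multiset.map_cons, Multiset.sum_cons] at hx
    obtain ⟨a, ha, b, hb, hab⟩ := Set.mem_add.mp hx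
    obtain ⟨c, hc1, hc2, rfl⟩ := ih b hb
    rw [segment_eq_image] at ha
    obtain ⟨t, ht, hta⟩ := ha
    refine ⟨(t, β) ::ₘ c, by simp [hc1], ?_, ?_⟩
    · intro p hp
      rcases Multiset.mem_cons.mp hp with h | h
      · subst h; exact ht
      · exact hc2 p h
    · simp only [Multiset.map_cons, Multiset.sum_cons, ← hab, ← hta]
      simp

lemma msum_ite {α M : Type} [AddCommMonoid M] (c : Multiset α) (p : α → Prop) [DecidablePred p]
    (f : α → M) : ((c.filter p).map f).sum = (c.map fun x => if p x then f x else 0).sum := by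
  induction c using Multiset.induction with
  | empty => simp
  | cons a c ih => by_cases h : p a <;> simp [Multiset.filter_cons, h, ih]

/-- face decomposition of weights on the boundary face `𝔽(λ)` of the
magic window.  Let `N` be a symmetric multiset of weights, `P` the positive roots
(so the roots are `Φ = P ⊔ (−P)`), `ρ = (1/2)∑P`, and `l = ⟨λ,·⟩` a dominant
cocharacter pairing (`l ≥ 0` on `P`).  If `l χ = (1/2)l(N^{λ>0}) − (1/2)l(g^{λ>0})`
and `χ + ρ ∈ (1/2)𝕎` with `𝕎 = ∑_{β∈N}[0,β]`, then
`χ = (1/2)N^{λ>0} − (1/2)g^{λ>0} + ψ` with `l ψ = 0` and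
`ψ + ρ_L ∈ (1/2)𝕎(N^λ)`, where `ρ_L = (1/2)∑_{α∈P, l α = 0} α`. -/
theorem window_face_decomposition {M : Type} [AddCommGroup M] [Module ℝ M]
    (N P : Multiset M) (l : M →ₗ[ℝ] ℝ) (χ ρ : M)
    (hNsym : N.map (fun β => -β) = N)
    (hdom : ∀ α ∈ P, 0 ≤ l α)
    (hρ : ρ = (2⁻¹ : ℝ) • P.sum)
    (hl : l χ =
        2⁻¹ * l ((N.filter fun β => 0 < l β).sum) -
          2⁻¹ * l (((P + P.map (fun α => -α)).filter fun α => 0 < l α).sum))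
    (hface : χ + ρ ∈ (2⁻¹ : ℝ) • ((N.map fun β => segment ℝ (0 : M) β).sum)) :
    ∃ ψ : M,
      χ = (2⁻¹ : ℝ) • (N.filter fun β => 0 < l β).sum -
            (2⁻¹ : ℝ) • ((P + P.map (fun α => -α)).filter fun α => 0 < l α).sum + ψ ∧
      l ψ = 0 ∧
      ψ + (2⁻¹ : ℝ) • (P.filter fun α => l α = 0).sum ∈
        (2⁻¹ : ℝ) • (((N.filter fun β => l β = 0).map fun β => segment ℝ (0 : M) β).sum) := by
  classical
  -- simplify the g^{λ>0} term
  have hBneg : ((P.map fun α => -α).filter fun α => 0 < l α) = 0 := by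
    rw [Multiset.filter_eq_nil]
    intro a ha
    obtain ⟨α, hα, rfl⟩ := Multiset.mem_map.mp ha
    simp only [map_neg]
    intro h
    exact absurd (hdom α hα) (by linarith)
  have hB : ((P + P.map fun α => -α).filter fun α => 0 < l α) =
      (P.filter fun α => 0 < l α) := by
    rw [Multiset.filter_add, hBneg, add_zero]
  -- the zero-part of P
  have hP0 : (P.filter fun α => ¬ 0 < l α) = (P.filter fun α => l α = 0) := by
    apply Multiset.filter_congr
    intro α hα
    constructor
    · intro h; exact le_antisymm (not_lt.mp h) (hdom α hα)
    · intro h; simp [h]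
  have hPsplit : (P.filter fun α => 0 < l α) + (P.filter fun α => l α = 0) = P := by
    rw [← hP0]; exact Multiset.filter_add_not _ P
  have hPsum : P.sum = (P.filter fun α => 0 < l α).sum + (P.filter fun α => l α = 0).sum := by
    conv_lhs => rw [← hPsplit]
    exact Multiset.sum_add _ _
  have hlP0 : l ((P.filter fun α => l α = 0).sum) = 0 := by
    rw [map_multiset_sum]
    apply Multiset.sum_eq_zero
    intro x hx
    obtain ⟨α, hα, rfl⟩ := Multiset.mem_map.mp hx
    exact (Multiset.mem_filter.mp hα).2
  -- extract the convex combination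
  obtain ⟨w, hw, hwe⟩ := Set.mem_smul_set.mp hface
  obtain ⟨c, hc1, hc2, rfl⟩ := mink_exists N w hw
  -- filters of N expressed via c
  have hNpos : (N.filter fun β => 0 < l β) =
      (c.filter fun p => 0 < l p.2).map Prod.snd := by
    rw [← hc1, Multiset.filter_map]; rfl
  have hNzero : (N.filter fun β => l β = 0) =
      (c.filter fun p => l p.2 = 0).map Prod.snd := by
    rw [← hc1, Multiset.filter_map]; rfl
  -- l of the convex combination
  have hlw : l ((c.map fun p => p.1 • p.2).sum) = (c.map fun p => p.1 * l p.2).sum := by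
    rw [map_multiset_sum, Multiset.map_map]
    congr 1
    apply Multiset.map_congr rfl
    intro p _
    simp
  -- l of positive part
  have hlA : l ((N.filter fun β => 0 < l β).sum) =
      (c.map fun p => if 0 < l p.2 then l p.2 else 0).sum := by
    rw [hNpos, map_multiset_sum, Multiset.map_map, msum_ite]
    rfl
  -- the key equality: l w = l A
  have hlkey : (c.map fun p => p.1 * l p.2).sum =
      (c.map fun p => if 0 < l p.2 then l p.2 else 0).sum := by
    have h1 : l (χ + ρ) = 2⁻¹ * (c.map fun p => p.1 * l p.2).sum := by
      rw [← hwe, map_smul, hlw, smul_eq_mul]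
    have h2 : l (χ + ρ) = 2⁻¹ * (c.map fun p => if 0 < l p.2 then l p.2 else 0).sum := by
      have hρl : l ρ = 2⁻¹ * l ((P.filter fun α => 0 < l α).sum) := by
        rw [hρ, map_smul, smul_eq_mul, hPsum, map_add, hlP0, add_zero]
      rw [map_add, hl, hB, hρl, ← hlA]
      ring
    rw [h1] at h2
    linarith
  -- the slack function is nonneg and sums to zero, hence vanishes
  have hslack : ∀ p ∈ c, (if 0 < l p.2 then l p.2 else 0) - p.1 * l p.2 = 0 := by
    have hsum0 : (c.map fun p => (if 0 < l p.2 then l p.2 else 0) - p.1 * l p.2).sum = 0 := by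
      rw [Multiset.sum_map_sub, hlkey, sub_self]
    have hnn : ∀ x ∈ c.map fun p => (if 0 < l p.2 then l p.2 else 0) - p.1 * l p.2, 0 ≤ x := by
      intro x hx
      obtain ⟨p, hp, rfl⟩ := Multiset.mem_map.mp hx
      obtain ⟨ht0, ht1⟩ := hc2 p hp
      by_cases h : 0 < l p.2
      · simp only [h, if_pos]
        nlinarith
      · simp only [h, if_neg, not_false_iff, zero_sub, neg_nonneg]
        exact mul_nonpos_of_nonneg_of_nonpos ht0 (not_lt.mp h)
    intro p hp
    have hle := Multiset.single_le_sum hnn _ (Multiset.mem_map_of_mem _ hp)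
    have hge := hnn _ (Multiset.mem_map_of_mem (fun p => (if 0 < l p.2 then l p.2 else 0) - p.1 * l p.2) hp)
    rw [hsum0] at hle
    linarith
  -- pointwise description of the convex combination
  have hpt : ∀ p ∈ c, p.1 • p.2 =
      (if 0 < l p.2 then p.2 else 0) + (if l p.2 = 0 then p.1 • p.2 else 0) := by
    intro p hp
    have hs := hslack p hp
    by_cases h : 0 < l p.2
    · have h0 : ¬ l p.2 = 0 := ne_of_gt h
      simp only [h, if_pos, h0, if_neg, not_false_iff, add_zero]
      have : p.1 = 1 := by
        rw [if_pos h] at hs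
        have : (1 - p.1) * l p.2 = 0 := by ring_nf; linarith
        rcases mul_eq_zero.mp this with h' | h'
        · linarith
        · exact absurd h' (ne_of_gt h)
      rw [this, one_smul]
    · by_cases h0 : l p.2 = 0
      · simp [h, h0]
      · simp only [h, if_neg, not_false_iff, h0, zero_add]
        have hlt : l p.2 < 0 := lt_of_le_of_ne (not_lt.mp h) h0
        rw [if_neg h] at hs
        have : p.1 = 0 := by
          have : p.1 * l p.2 = 0 := by linarith
          rcases mul_eq_zero.mp this with h' | h'
          · exact h'
          · exact absurd h' (ne_of_lt hlt)
        rw [this, zero_smul]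
  -- split the sum
  have hwsplit : (c.map fun p => p.1 • p.2).sum =
      (N.filter fun β => 0 < l β).sum +
        ((c.filter fun p => l p.2 = 0).map fun p => p.1 • p.2).sum := by
    rw [Multiset.map_congr rfl hpt, Multiset.sum_map_add]
    congr 1
    · rw [hNpos, ← msum_ite]
    · rw [msum_ite]
  -- define ψ
  set z := ((c.filter fun p => l p.2 = 0).map fun p => p.1 • p.2).sum with hz
  refine ⟨χ - ((2⁻¹ : ℝ) • (N.filter fun β => 0 < l β).sum -
      (2⁻¹ : ℝ) • ((P + P.map fun α => -α).filter fun α => 0 < l α).sum), by abel, ?_, ?_⟩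
  · simp only [map_sub, map_smul, smul_eq_mul]
    rw [hl]; ring
  · have hψρ : χ - ((2⁻¹ : ℝ) • (N.filter fun β => 0 < l β).sum -
        (2⁻¹ : ℝ) • ((P + P.map fun α => -α).filter fun α => 0 < l α).sum) +
        (2⁻¹ : ℝ) • (P.filter fun α => l α = 0).sum = (2⁻¹ : ℝ) • z := by
      have hχρ : χ + ρ = (2⁻¹ : ℝ) • ((N.filter fun β => 0 < l β).sum + z) := by
        rw [← hwe, hwsplit]
      have hρeq : ρ = (2⁻¹ : ℝ) • (P.filter fun α => 0 < l α).sum +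
          (2⁻¹ : ℝ) • (P.filter fun α => l α = 0).sum := by
        rw [hρ, hPsum, smul_add]
      rw [hB]
      have : χ = (2⁻¹ : ℝ) • ((N.filter fun β => 0 < l β).sum + z) - ρ := by
        rw [← hχρ]; abel
      rw [this, hρeq, smul_add]
      abel
    rw [hψρ]
    apply Set.smul_mem_smul_set
    have := mink_mem_of (c.filter fun p => l p.2 = 0)
      (fun p hp => hc2 p (Multiset.mem_of_mem_filter hp))
    rwa [← hNzero] at this
end
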